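/- arXiv:2204.08854 — 2 statements merged into one kernel-verified Lean document; each statement's English description precedes it below -/
import Mathlib

section
/- Let Q be the quadratic form of signature (p+1, q) on ℝ^{p+q+1} with p < q. Then there exists an element g ∈ O(p+1, q) of infinite order such that the cyclic group ⟨g⟩ acts properly discontinuously on X(p,q) = Q⁻¹(1). Concretely, for p < q one may take g to be a hyperbolic element acting by cosh/sinh rotation in a hyperbolic plane positive-negative coordinate pair, with all powers gⁿ moving every point of X(p,q) off any fixed compact set. -/
/-!
Pair the `p + 1` positive coordinates with `p + 1` of the `q` negative ones (possible as `p < q`)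
and let `g` boost each pair by rapidity `t > 0`. In the null coordinates
`a_k = x_k + x_{k+p+1}`, `b_k = x_k - x_{k+p+1}` it multiplies every `a_k` by `eᵗ` and every
`b_k` by `e⁻ᵗ`, so the pairing `β(y, x) = ∑ₖ a_k(y) b_k(x)` satisfies
`β(gⁿx, x) = eⁿᵗ β(x, x)` and `β(x, gⁿx) = e⁻ⁿᵗ β(x, x)`. On `X(p, q)`,
`β(x, x) = Q(x) + (squares of the unpaired coordinates) ≥ 1`, while `β` is bounded on `C × C` for
compact `C`; hence `gⁿC ∩ C ≠ ∅` bounds `|n|`.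
-/

/-- The standard quadratic form of signature `(p+1, q)` on `ℝ^{p+q+1}`. -/
noncomputable def spaceFormQ (p q : ℕ) (x : EuclideanSpace ℝ (Fin (p + q + 1))) : ℝ :=
  ∑ i : Fin (p + q + 1), if (i : ℕ) < p + 1 then (x i) ^ 2 else -((x i) ^ 2)

open scoped Pointwise

section ExpandingDynamics

variable {G E : Type*} [Group G] [MulAction G E]

theorem apply_zpow_smul_of_apply_smul {φ : E → ℝ} {c : ℝ} (hc : c ≠ 0) {g : G}
    (hφ : ∀ y, φ (g • y) = c * φ y) (n : ℤ) (y : E) : φ ((g ^ n) • y) = c ^ n * φ y := by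
  have hφ_inv : ∀ y, φ (g⁻¹ • y) = c⁻¹ * φ y := fun y => by
    rw [eq_inv_mul_iff_mul_eq₀ hc, ← hφ, smul_inv_smul]
  induction n using Int.induction_on generalizing y with
  | zero => simp
  | succ n ih => rw [zpow_add_one, mul_smul, ih, hφ, zpow_add_one₀ hc]; ring
  | pred n ih => rw [zpow_sub_one, mul_smul, ih, hφ_inv, zpow_sub_one₀ hc]; ring

theorem not_isOfFinOrder_of_apply_smul {φ : E → ℝ} {c : ℝ} (hc : 1 < c) {g : G}
    (hφ : ∀ y, φ (g • y) = c * φ y) {y : E} (hy : φ y ≠ 0) : ¬IsOfFinOrder g := by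
  rw [isOfFinOrder_iff_pow_eq_one]
  rintro ⟨n, hn, hgn⟩
  have h := apply_zpow_smul_of_apply_smul (by positivity) hφ n y
  rw [zpow_natCast, hgn, one_smul, eq_comm, mul_eq_right₀ hy] at h
  exact (one_lt_pow₀ hc hn.ne').ne' h

theorem finite_setOf_zpow_le_and_zpow_neg_le {c : ℝ} (hc : 1 < c) (K : ℝ) :
    {n : ℤ | c ^ n ≤ K ∧ c ^ (-n) ≤ K}.Finite := by
  obtain ⟨N, hN⟩ := pow_unbounded_of_one_lt K hc
  rw [← zpow_natCast] at hN
  refine (Set.finite_Icc (-N : ℤ) N).subset fun n ⟨h₁, h₂⟩ => ?_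
  have h₁' := (zpow_lt_zpow_iff_right₀ hc).mp (h₁.trans_lt hN)
  have h₂' := (zpow_lt_zpow_iff_right₀ hc).mp (h₂.trans_lt hN)
  constructor <;> omega

theorem finite_setOf_zpow_smul_inter_nonempty [TopologicalSpace E] {β : E → E → ℝ}
    (hβ : Continuous (Function.uncurry β)) {c : ℝ} (hc : 1 < c) {g : G}
    (hleft : ∀ y x, β (g • y) x = c * β y x) (hright : ∀ y x, β y (g • x) = c⁻¹ * β y x)
    {C : Set E} (hC : IsCompact C) (hpos : ∀ x ∈ C, 0 < β x x) :
    {n : ℤ | ((g ^ n) • C ∩ C).Nonempty}.Finite := by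
  obtain ⟨R, hR⟩ := (hC.prod hC).exists_bound_of_continuousOn hβ.continuousOn
  have hdiag : Continuous fun x => β x x := hβ.comp (continuous_id.prodMk continuous_id)
  obtain ⟨δ, hδ, hδC⟩ := hC.exists_forall_le' hdiag.continuousOn hpos
  have hbound : ∀ x ∈ C, ∀ y ∈ C, β y x ≤ R := fun x hx y hy =>
    (le_abs_self _).trans (hR (y, x) ⟨hy, hx⟩)
  refine (finite_setOf_zpow_le_and_zpow_neg_le hc (R / δ)).subset ?_
  rintro n ⟨_, ⟨x, hx, rfl⟩, hnx⟩
  have h₁ := apply_zpow_smul_of_apply_smul (φ := (β · x)) (by positivity) (hleft · x) n x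
  have h₂ := apply_zpow_smul_of_apply_smul (φ := β x) (inv_ne_zero (by positivity)) (hright x) n x
  rw [inv_zpow'] at h₂
  constructor <;> rw [le_div_iff₀ hδ]
  · calc c ^ n * δ ≤ c ^ n * β x x := by gcongr; exact hδC x hx
      _ = β ((g ^ n) • x) x := h₁.symm
      _ ≤ R := hbound x hx _ hnx
  · calc c ^ (-n) * δ ≤ c ^ (-n) * β x x := by gcongr; exact hδC x hx
      _ = β x ((g ^ n) • x) := h₂.symm
      _ ≤ R := hbound _ hnx x hx

end ExpandingDynamics

namespace LorentzBoost

variable {N : ℕ}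

/-- Coordinates indexed by `ℕ`, with the junk value `0` from index `N` on. -/
noncomputable def coord (x : EuclideanSpace ℝ (Fin N)) (n : ℕ) : ℝ :=
  if h : n < N then x ⟨n, h⟩ else 0

theorem coord_val (x : EuclideanSpace ℝ (Fin N)) (i : Fin N) : coord x i = x i :=
  dif_pos i.isLt

theorem coord_of_le (x : EuclideanSpace ℝ (Fin N)) {n : ℕ} (hn : N ≤ n) : coord x n = 0 :=
  dif_neg hn.not_gt

theorem coord_injective : Function.Injective (coord : EuclideanSpace ℝ (Fin N) → ℕ → ℝ) :=
  fun x y h => by ext i; rw [← coord_val, ← coord_val, h]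

@[fun_prop]
theorem continuous_coord (n : ℕ) : Continuous fun x : EuclideanSpace ℝ (Fin N) => coord x n := by
  unfold coord; split_ifs <;> fun_prop

/-- The boost of rapidity `t` in each of the coordinate planes `(k, k + m)`, `k < m`. -/
noncomputable def boost (m : ℕ) (t : ℝ) :
    EuclideanSpace ℝ (Fin N) →ₗ[ℝ] EuclideanSpace ℝ (Fin N) where
  toFun x := WithLp.toLp 2 fun i =>
    if (i : ℕ) < m then Real.cosh t * coord x i + Real.sinh t * coord x (i + m)
    else if (i : ℕ) < 2 * m then Real.sinh t * coord x (i - m) + Real.cosh t * coord x i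
    else coord x i
  map_add' x y := by
    ext i
    simp only [coord, PiLp.add_apply]
    split_ifs <;> ring
  map_smul' r x := by
    ext i
    simp only [coord, PiLp.smul_apply, smul_eq_mul, RingHom.id_apply]
    split_ifs <;> ring

theorem coord_boost {m n : ℕ} (t : ℝ) (x : EuclideanSpace ℝ (Fin N)) (hn : n < N) :
    coord (boost m t x) n =
      if n < m then Real.cosh t * coord x n + Real.sinh t * coord x (n + m)
      else if n < 2 * m then Real.sinh t * coord x (n - m) + Real.cosh t * coord x n
      else coord x n := by
  obtain ⟨i, rfl⟩ : ∃ i : Fin N, (i : ℕ) = n := ⟨⟨n, hn⟩, rfl⟩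
  rw [coord_val]
  rfl

variable {m k : ℕ} (t : ℝ) (x : EuclideanSpace ℝ (Fin N))

theorem coord_boost_of_lt (hm : 2 * m ≤ N) (hk : k < m) :
    coord (boost m t x) k = Real.cosh t * coord x k + Real.sinh t * coord x (k + m) := by
  rw [coord_boost t x (by omega), if_pos hk]

theorem coord_boost_add_of_lt (hm : 2 * m ≤ N) (hk : k < m) :
    coord (boost m t x) (k + m) = Real.sinh t * coord x k + Real.cosh t * coord x (k + m) := by
  rw [coord_boost t x (by omega), if_neg (by omega), if_pos (by omega), Nat.add_sub_cancel]

theorem coord_boost_of_le {n : ℕ} (hn : 2 * m ≤ n) : coord (boost m t x) n = coord x n := by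
  rcases lt_or_ge n N with hnN | hnN
  · rw [coord_boost t x hnN, if_neg (by omega), if_neg (by omega)]
  · rw [coord_of_le _ hnN, coord_of_le _ hnN]

theorem boost_boost_neg (hm : 2 * m ≤ N) : boost m t (boost m (-t) x) = x := by
  have hch := Real.cosh_sq_sub_sinh_sq t
  apply coord_injective
  funext n
  rcases lt_or_ge n m with hn | hn
  · rw [coord_boost_of_lt t _ hm hn, coord_boost_of_lt _ x hm hn, coord_boost_add_of_lt _ x hm hn,
      Real.cosh_neg, Real.sinh_neg]
    linear_combination coord x n * hch
  rcases lt_or_ge n (2 * m) with hn' | hn'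
  · obtain ⟨k, hk, rfl⟩ : ∃ k < m, n = k + m := ⟨n - m, by omega, by omega⟩
    rw [coord_boost_add_of_lt t _ hm hk, coord_boost_of_lt _ x hm hk,
      coord_boost_add_of_lt _ x hm hk, Real.cosh_neg, Real.sinh_neg]
    linear_combination coord x (k + m) * hch
  · rw [coord_boost_of_le t _ hn', coord_boost_of_le _ x hn']

noncomputable def boostEquiv (hm : 2 * m ≤ N) (t : ℝ) :
    EuclideanSpace ℝ (Fin N) ≃ₗ[ℝ] EuclideanSpace ℝ (Fin N) :=
  .ofLinearMap (f := boost m t) (g := boost m (-t)) (LinearMap.ext (boost_boost_neg t · hm))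
    (LinearMap.ext fun x => by simpa using boost_boost_neg (-t) x hm)

noncomputable def lightconePlus (m k : ℕ) (x : EuclideanSpace ℝ (Fin N)) : ℝ :=
  coord x k + coord x (k + m)

noncomputable def lightconeMinus (m k : ℕ) (x : EuclideanSpace ℝ (Fin N)) : ℝ :=
  coord x k - coord x (k + m)

theorem lightconePlus_boost (hm : 2 * m ≤ N) (hk : k < m) :
    lightconePlus m k (boost m t x) = Real.exp t * lightconePlus m k x := by
  rw [lightconePlus, lightconePlus, coord_boost_of_lt t x hm hk, coord_boost_add_of_lt t x hm hk,
    ← Real.cosh_add_sinh]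
  ring

theorem lightconeMinus_boost (hm : 2 * m ≤ N) (hk : k < m) :
    lightconeMinus m k (boost m t x) = Real.exp (-t) * lightconeMinus m k x := by
  rw [lightconeMinus, lightconeMinus, coord_boost_of_lt t x hm hk,
    coord_boost_add_of_lt t x hm hk, ← Real.cosh_sub_sinh]
  ring

noncomputable def lightconePairing (m : ℕ) (y x : EuclideanSpace ℝ (Fin N)) : ℝ :=
  ∑ k ∈ Finset.range m, lightconePlus m k y * lightconeMinus m k x

theorem continuous_lightconePairing (m : ℕ) :
    Continuous (Function.uncurry (lightconePairing (N := N) m)) := by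
  unfold Function.uncurry lightconePairing lightconePlus lightconeMinus
  fun_prop

theorem lightconePairing_boost_left (hm : 2 * m ≤ N) (y : EuclideanSpace ℝ (Fin N)) :
    lightconePairing m (boost m t y) x = Real.exp t * lightconePairing m y x := by
  rw [lightconePairing, lightconePairing, Finset.mul_sum]
  refine Finset.sum_congr rfl fun k hk => ?_
  rw [lightconePlus_boost t y hm (Finset.mem_range.mp hk), mul_assoc]

theorem lightconePairing_boost_right (hm : 2 * m ≤ N) (y : EuclideanSpace ℝ (Fin N)) :
    lightconePairing m y (boost m t x) = Real.exp (-t) * lightconePairing m y x := by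
  rw [lightconePairing, lightconePairing, Finset.mul_sum]
  refine Finset.sum_congr rfl fun k hk => ?_
  rw [lightconeMinus_boost t x hm (Finset.mem_range.mp hk)]
  ring

end LorentzBoost

open LorentzBoost

theorem spaceFormQ_eq_lightconePairing_sub {p q : ℕ} (hpq : p < q)
    (x : EuclideanSpace ℝ (Fin (p + q + 1))) :
    spaceFormQ p q x = lightconePairing (p + 1) x x -
      ∑ n ∈ Finset.Ico (2 * (p + 1)) (p + q + 1), coord x n ^ 2 := by
  set f : ℕ → ℝ := fun n => if n < p + 1 then coord x n ^ 2 else -(coord x n ^ 2)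
  have hQ : spaceFormQ p q x = ∑ n ∈ Finset.range (p + q + 1), f n := by
    simp only [spaceFormQ, f, ← Fin.sum_univ_eq_sum_range, coord_val]
  rw [hQ, ← Finset.sum_range_add_sum_Ico f (by omega : p + 1 ≤ p + q + 1),
    ← Finset.sum_Ico_consecutive f (by omega : p + 1 ≤ 2 * (p + 1))
      (by omega : 2 * (p + 1) ≤ p + q + 1),
    Finset.sum_Ico_eq_sum_range f (p + 1), show 2 * (p + 1) - (p + 1) = p + 1 by omega]
  have hlow : ∑ n ∈ Finset.range (p + 1), f n = ∑ k ∈ Finset.range (p + 1), coord x k ^ 2 :=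
    Finset.sum_congr rfl fun n hn => if_pos (Finset.mem_range.mp hn)
  have hmid : ∑ k ∈ Finset.range (p + 1), f (p + 1 + k) =
      -∑ k ∈ Finset.range (p + 1), coord x (k + (p + 1)) ^ 2 := by
    rw [← Finset.sum_neg_distrib]
    exact Finset.sum_congr rfl fun k _ => by rw [add_comm]; exact if_neg (by omega)
  have htail : ∑ n ∈ Finset.Ico (2 * (p + 1)) (p + q + 1), f n =
      -∑ n ∈ Finset.Ico (2 * (p + 1)) (p + q + 1), coord x n ^ 2 := by
    rw [← Finset.sum_neg_distrib]
    exact Finset.sum_congr rfl fun n hn => if_neg (by simp at hn; omega)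
  have hpairing : lightconePairing (p + 1) x x = ∑ k ∈ Finset.range (p + 1), coord x k ^ 2 -
      ∑ k ∈ Finset.range (p + 1), coord x (k + (p + 1)) ^ 2 := by
    rw [← Finset.sum_sub_distrib]
    exact Finset.sum_congr rfl fun k _ => by simp only [lightconePlus, lightconeMinus]; ring
  rw [hlow, hmid, htail, hpairing]
  ring

theorem spaceFormQ_le_lightconePairing {p q : ℕ} (hpq : p < q)
    (x : EuclideanSpace ℝ (Fin (p + q + 1))) :
    spaceFormQ p q x ≤ lightconePairing (p + 1) x x := by
  rw [spaceFormQ_eq_lightconePairing_sub hpq, sub_le_self_iff]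
  exact Finset.sum_nonneg fun n _ => sq_nonneg _

theorem spaceFormQ_boost {p q : ℕ} (hpq : p < q) (t : ℝ)
    (x : EuclideanSpace ℝ (Fin (p + q + 1))) :
    spaceFormQ p q (boost (p + 1) t x) = spaceFormQ p q x := by
  have hm : 2 * (p + 1) ≤ p + q + 1 := by omega
  rw [spaceFormQ_eq_lightconePairing_sub hpq, spaceFormQ_eq_lightconePairing_sub hpq,
    lightconePairing_boost_left t _ hm, lightconePairing_boost_right t _ hm, ← mul_assoc,
    ← Real.exp_add, add_neg_cancel, Real.exp_zero, one_mul]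
  congr 1
  exact Finset.sum_congr rfl fun n hn => by
    rw [coord_boost_of_le t x (Finset.mem_Ico.mp hn).1]

/-- if `p < q` then `O(p+1,q)` contains an element `g` of infinite order
whose cyclic group `⟨g⟩` acts properly discontinuously on `X(p,q) = Q⁻¹(1)`:
every compact subset `C` of `X(p,q)` meets only finitely many of its translates `gⁿC`. -/
theorem exists_infinite_order_properlyDiscontinuous (p q : ℕ) (hpq : p < q) :
    ∃ g : EuclideanSpace ℝ (Fin (p + q + 1)) ≃ₗ[ℝ] EuclideanSpace ℝ (Fin (p + q + 1)),
      (∀ z, spaceFormQ p q (g z) = spaceFormQ p q z) ∧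
      ¬ IsOfFinOrder g ∧
      ∀ C : Set (EuclideanSpace ℝ (Fin (p + q + 1))),
        C ⊆ {x | spaceFormQ p q x = 1} → IsCompact C →
        ({n : ℤ | (((g ^ n :
            EuclideanSpace ℝ (Fin (p + q + 1)) ≃ₗ[ℝ] EuclideanSpace ℝ (Fin (p + q + 1)))
              '' C) ∩ C).Nonempty}).Finite := by
  have hm : 2 * (p + 1) ≤ p + q + 1 := by omega
  have hexp : 1 < Real.exp 1 := Real.one_lt_exp_iff.mpr one_pos
  refine ⟨boostEquiv hm 1, spaceFormQ_boost hpq 1, ?_, fun C hCX hC => ?_⟩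
  · set e := EuclideanSpace.single (⟨0, by omega⟩ : Fin (p + q + 1)) (1 : ℝ)
    have he : lightconePlus (p + 1) 0 e ≠ 0 := by
      simp [e, lightconePlus, coord]
    exact not_isOfFinOrder_of_apply_smul hexp (lightconePlus_boost 1 · hm (Nat.succ_pos p)) he
  · have hpos : ∀ x ∈ C, 0 < lightconePairing (p + 1) x x := fun x hx =>
      one_pos.trans_le ((hCX hx).symm.trans_le (spaceFormQ_le_lightconePairing hpq x))
    exact finite_setOf_zpow_smul_inter_nonempty (g := boostEquiv hm 1)
      (continuous_lightconePairing (p + 1)) hexp (fun y x => lightconePairing_boost_left 1 x hm y)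
      (fun y x => by rw [← Real.exp_neg]; exact lightconePairing_boost_right 1 x hm y) hC hpos
end

section
/- Suppose H is a closed non-compact subgroup of a locally compact Hausdorff group G and Γ is a discrete subgroup of G such that Γ\G is compact and Γ acts properly discontinuously on G/H. Then Γ is finite. Equivalently, a cocompact lattice in G never acts properly discontinuously on G/H by an infinite group when H is non-compact. -/
/-!
Pick a compact `K ⊆ G` with `K Γ = G` (cocompactness) and let `C` be the image of `K⁻¹ ∪ {1}`
in `G ⧸ H`. Writing `h ∈ H` as `k γ`, the element `γ = k⁻¹ h` sends the coset `H ∈ C` to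
`k⁻¹ H ∈ C`, so it lies in the finite set of `γ ∈ Γ` with `γ C ∩ C ≠ ∅`. Hence `H` is a closed
subset of the compact set `K S` for a finite `S`, so `H` is compact.
-/

open Set Topology
open scoped Pointwise

theorem IsOpenMap.exists_isCompact_image_eq_univ {X Y : Type*} [TopologicalSpace X]
    [TopologicalSpace Y] [WeaklyLocallyCompactSpace X] [CompactSpace Y] {f : X → Y}
    (hf : IsOpenMap f) (hsurj : Function.Surjective f) :
    ∃ K : Set X, IsCompact K ∧ f '' K = univ := by
  choose L hL hLnhds using fun y => exists_compact_mem_nhds (Function.surjInv hsurj y)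
  have hnhds (y : Y) : f '' L y ∈ 𝓝 y := by
    simpa [Function.surjInv_eq hsurj] using hf.image_mem_nhds (hLnhds y)
  obtain ⟨t, ht⟩ := CompactSpace.elim_nhds_subcover _ hnhds
  refine ⟨⋃ y ∈ t, L y, t.isCompact_biUnion fun y _ => hL y, ?_⟩
  rw [image_iUnion₂]
  exact ht

theorem Subgroup.subset_mul_setOf_smul_image_inter_nonempty {G : Type*} [Group G]
    (H Γ : Subgroup G) {K : Set G} (hK : (QuotientGroup.mk '' K : Set (G ⧸ Γ)) = univ)
    {C : Set (G ⧸ H)} (h1C : ((1 : G) : G ⧸ H) ∈ C) (hKC : ∀ k ∈ K, ((k⁻¹ : G) : G ⧸ H) ∈ C) :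
    (H : Set G) ⊆ K * (Subtype.val '' {γ : Γ | ((fun x => (γ : G) • x) '' C ∩ C).Nonempty}) := by
  intro h hh
  obtain ⟨k, hk, hkh⟩ := hK.symm ▸ mem_univ (h : G ⧸ Γ)
  have hγ : k⁻¹ * h ∈ Γ := QuotientGroup.eq.mp hkh
  have hγ1 : (k⁻¹ * h) • ((1 : G) : G ⧸ H) = (k⁻¹ : G) := by
    rw [MulAction.Quotient.smul_mk, QuotientGroup.eq]
    simpa [mul_assoc] using H.inv_mem hh
  refine ⟨k, hk, k⁻¹ * h, ⟨⟨k⁻¹ * h, hγ⟩, ?_, rfl⟩, mul_inv_cancel_left k h⟩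
  exact ⟨_, ⟨_, h1C, hγ1⟩, hKC k hk⟩

theorem cocompact_lattice_not_properly_discontinuous_general
    (G : Type*) [Group G] [TopologicalSpace G] [IsTopologicalGroup G]
    [LocallyCompactSpace G]
    (H : Subgroup G) (hHclosed : IsClosed (H : Set G)) (hHnc : ¬ IsCompact (H : Set G))
    (Γ : Subgroup G) (hcocompact : CompactSpace (G ⧸ Γ))
    (hpd : ∀ C : Set (G ⧸ H), IsCompact C →
      ({γ : Γ | ((fun x => (γ : G) • x) '' C ∩ C).Nonempty}).Finite) :
    Finite Γ := by
  obtain ⟨K, hK, hKΓ⟩ :=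
    (QuotientGroup.isOpenMap_coe (N := Γ)).exists_isCompact_image_eq_univ
      QuotientGroup.mk_surjective
  set C : Set (G ⧸ H) := QuotientGroup.mk '' insert 1 K⁻¹
  have hC : IsCompact C := (hK.inv.insert 1).image continuous_quotient_mk'
  have hHKS := H.subset_mul_setOf_smul_image_inter_nonempty Γ hKΓ (C := C)
    ⟨1, mem_insert 1 _, rfl⟩ fun k hk => ⟨k⁻¹, mem_insert_of_mem 1 (inv_mem_inv.mpr hk), rfl⟩
  have hH : IsCompact (H : Set G) :=
    (hK.mul ((hpd C hC).image Subtype.val).isCompact).of_isClosed_subset hHclosed hHKS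
  exact absurd hH hHnc

/-- if `H` is a closed non-compact subgroup of a locally compact,
σ-compact Hausdorff group `G`, and `Γ` is a discrete subgroup of `G` with `Γ\G` compact
which acts properly discontinuously on `G/H`, then `Γ` is finite.  Equivalently, a
cocompact lattice in `G` never acts properly discontinuously on `G/H` by an infinite
group when `H` is non-compact. -/
theorem cocompact_lattice_not_properly_discontinuous
    (G : Type*) [Group G] [TopologicalSpace G] [IsTopologicalGroup G]
    [LocallyCompactSpace G] [T2Space G] [SigmaCompactSpace G]
    (H : Subgroup G) (hHclosed : IsClosed (H : Set G)) (hHnc : ¬ IsCompact (H : Set G))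
    (Γ : Subgroup G) (hΓ : DiscreteTopology Γ) (hcocompact : CompactSpace (G ⧸ Γ))
    (hpd : ∀ C : Set (G ⧸ H), IsCompact C →
      ({γ : Γ | ((fun x => (γ : G) • x) '' C ∩ C).Nonempty}).Finite) :
    Finite Γ :=
  cocompact_lattice_not_properly_discontinuous_general G H hHclosed hHnc Γ hcocompact hpd
end
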